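/- Let n ≥ 2 and let f be a Schwartz function on ℝ^{1+n} whose Fourier transform f̂ vanishes at every (τ,ξ) with ξ ≠ 0 and |τ| ≤ |ξ| (i.e., f̂ is supported, away from 0, in the open time-like cone {τ² > |ξ|²}). Then Lf(z,θ) = 0 for all z ∈ ℝ^n and θ ∈ S^{n-1}. (This is the exact, Fourier-support version of the statement that time-like singularities are invisible to the light ray transform: WF(f) ⊆ Γ^{tm} implies WF(Nf) = ∅.) -/

import Mathlib

open MeasureTheory Real FourierTransform
open scoped RealInnerProductSpace

/-!
Fix a light direction `θ` and put `g z = Lf(z, θ)`. The shear `(s, x) ↦ (s, x + s θ)` preserves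
Lebesgue measure, so by Fubini `ĝ(ξ) = f̂(-θ·ξ, ξ)` (with `2π`'s from Mathlib's normalisation
of `𝓕`). Since `|θ·ξ| ≤ |ξ|`, this covector is never time-like, so `ĝ` vanishes away from `0`;
being continuous it vanishes everywhere, and Fourier inversion gives `g = 0`.
-/

theorem SchwartzMap.exists_norm_le_mul_inv_one_add_sq {V F : Type*} [NormedAddCommGroup V]
    [NormedSpace ℝ V] [NormedAddCommGroup F] [NormedSpace ℝ F] (f : SchwartzMap V F) :
    ∃ C, 0 ≤ C ∧ ∀ x, ‖f x‖ ≤ C * (1 + ‖x‖ ^ 2)⁻¹ := by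
  obtain ⟨C₀, hC₀, hf₀⟩ := f.decay 0 0
  obtain ⟨C₂, hC₂, hf₂⟩ := f.decay 2 0
  refine ⟨C₀ + C₂, by positivity, fun x => ?_⟩
  have h₀ := hf₀ x
  have h₂ := hf₂ x
  simp only [norm_iteratedFDeriv_zero, pow_zero, one_mul] at h₀ h₂
  rw [← div_eq_mul_inv, le_div_iff₀ (by positivity)]
  linarith

section FourierInjective

variable {V E : Type*} [NormedAddCommGroup V] [InnerProductSpace ℝ V] [FiniteDimensional ℝ V]
  [MeasurableSpace V] [BorelSpace V] [NormedAddCommGroup E] [NormedSpace ℂ E] {f : V → E}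

theorem MeasureTheory.Integrable.continuous_fourier (hf : Integrable f) : Continuous (𝓕 f) :=
  VectorFourier.fourierIntegral_continuous Real.continuous_fourierChar (innerSL ℝ).continuous₂ hf

theorem Continuous.eq_zero_of_fourier_eq_zero_of_ne_zero [Nontrivial V] [CompleteSpace E]
    (hc : Continuous f) (hf : Integrable f) (h : ∀ ξ ≠ 0, 𝓕 f ξ = 0) : f = 0 := by
  have hzero : 𝓕 f = 0 :=
    hf.continuous_fourier.ext_on (dense_compl_singleton 0) continuous_const h
  rw [← hc.fourierInv_fourier_eq hf (hzero ▸ integrable_zero _ _ _), hzero]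
  ext
  simp [Real.fourierInv_eq]

end FourierInjective

section Shear

variable {V : Type*} [NormedAddCommGroup V] [NormedSpace ℝ V]

noncomputable def lightRayTransform (f : ℝ × V → ℂ) (z θ : V) : ℂ := ∫ s, f (s, z + s • θ)

def shear (θ : V) : (ℝ × V) ≃L[ℝ] ℝ × V :=
  (ContinuousLinearEquiv.refl ℝ ℝ).skewProd (ContinuousLinearEquiv.refl ℝ V)
    ((ContinuousLinearMap.id ℝ ℝ).smulRight θ)

@[simp]
theorem shear_apply (θ : V) (p : ℝ × V) : shear θ p = (p.1, p.2 + p.1 • θ) := rfl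

theorem continuous_lightRayTransform (f : SchwartzMap (ℝ × V) ℂ) (θ : V) :
    Continuous (lightRayTransform f · θ) := by
  obtain ⟨C, hC, hf⟩ := f.exists_norm_le_mul_inv_one_add_sq
  refine continuous_of_dominated (bound := fun s => C * (1 + s ^ 2)⁻¹)
    (fun z => ?_) (fun z => ae_of_all _ fun s => ?_) (integrable_inv_one_add_sq.const_mul C)
    (ae_of_all _ fun s => by fun_prop)
  · exact (f.continuous.comp (by fun_prop)).aestronglyMeasurable
  · refine (hf _).trans (mul_le_mul_of_nonneg_left ?_ hC)
    have hs := pow_le_pow_left₀ (abs_nonneg s) (norm_fst_le (s, z + s • θ)) 2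
    rw [sq_abs] at hs
    exact inv_anti₀ (by positivity) (by linarith)

variable [MeasurableSpace V] [BorelSpace V] (μ : Measure ℝ) [SFinite μ] (ν : Measure V) [SFinite ν]
  [ν.IsAddRightInvariant]

theorem measurePreserving_shear (θ : V) : MeasurePreserving (shear θ) (μ.prod ν) (μ.prod ν) := by
  refine (MeasurePreserving.id μ).skew_product
    (g := fun s x => x + s • θ) (shear θ).continuous.measurable.snd ?_
  exact ae_of_all _ fun s => (measurePreserving_add_right ν (s • θ)).map_eq

theorem integrable_comp_shear {f : ℝ × V → ℂ} (hf : Integrable f (μ.prod ν)) (θ : V) :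
    Integrable (f ∘ shear θ) (μ.prod ν) :=
  ((measurePreserving_shear μ ν θ).integrable_comp hf.aestronglyMeasurable).mpr hf

omit μ in
theorem integrable_lightRayTransform {f : ℝ × V → ℂ} (hf : Integrable f (volume.prod ν)) (θ : V) :
    Integrable (lightRayTransform f · θ) ν :=
  (integrable_comp_shear volume ν hf θ).integral_prod_right

end Shear

section Fourier

variable {V : Type*} [NormedAddCommGroup V] [InnerProductSpace ℝ V] [FiniteDimensional ℝ V]
  [MeasurableSpace V] [BorelSpace V]

instance : (volume : Measure (ℝ × V)).IsAddHaarMeasure := by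
  rw [Measure.volume_eq_prod]
  infer_instance

noncomputable def spacetimeFourier (f : ℝ × V → ℂ) (τ : ℝ) (ξ : V) : ℂ :=
  ∫ w : ℝ × V, Complex.exp (-(Complex.I * ((w.1 * τ + inner ℝ w.2 ξ : ℝ) : ℂ))) * f w

theorem fourier_integral_fst {F : ℝ × V → ℂ} (hF : Integrable F) (ξ : V) :
    𝓕 (fun x => ∫ s, F (s, x)) ξ = ∫ p : ℝ × V, 𝐞 (-⟪p.2, ξ⟫) • F p := by
  have hF' : Integrable (fun p : ℝ × V => 𝐞 (-⟪p.2, ξ⟫) • F p) :=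
    (fourierIntegral_convergent_iff' ((innerSL ℝ).comp (ContinuousLinearMap.snd ℝ ℝ V)) ξ).2 hF
  rw [Real.fourier_eq, Measure.volume_eq_prod, integral_prod_symm _ hF']
  simp only [Circle.smul_def, smul_eq_mul, integral_const_mul]

theorem fourier_lightRayTransform {f : ℝ × V → ℂ} (hf : Integrable f) (θ ξ : V) :
    𝓕 (lightRayTransform f · θ) ξ = spacetimeFourier f (-(2 * π * ⟪θ, ξ⟫)) ((2 * π) • ξ) := by
  have hshear : Integrable (f ∘ shear θ) := integrable_comp_shear volume volume hf θ
  rw [show (lightRayTransform f · θ) = fun x => ∫ s, (f ∘ shear θ) (s, x) from rfl,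
    fourier_integral_fst hshear, spacetimeFourier, Measure.volume_eq_prod]
  conv_rhs => rw [← (measurePreserving_shear volume volume θ).integral_comp
      (shear θ).toHomeomorph.measurableEmbedding]
  congr 1 with p
  simp only [Circle.smul_def, Real.fourierChar_apply, Function.comp_apply, shear_apply,
    smul_eq_mul, inner_add_left, real_inner_smul_left, real_inner_smul_right]
  congr 2
  push_cast
  ring

end Fourier

theorem timelike_fourier_support_implies_light_ray_vanishes_general
    (n : ℕ)
    (f : SchwartzMap (ℝ × EuclideanSpace ℝ (Fin n)) ℂ)
    (hhat : ∀ (τ : ℝ) (ξ : EuclideanSpace ℝ (Fin n)), ξ ≠ 0 → |τ| ≤ ‖ξ‖ →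
      (∫ w : ℝ × EuclideanSpace ℝ (Fin n),
          Complex.exp (-(Complex.I * ((w.1 * τ + inner ℝ w.2 ξ : ℝ) : ℂ))) * f w) = 0) :
    ∀ (z θ : EuclideanSpace ℝ (Fin n)), ‖θ‖ = 1 →
      (∫ s : ℝ, f (s, z + s • θ)) = 0 := by
  intro z θ hθ
  have : Nontrivial (EuclideanSpace ℝ (Fin n)) := nontrivial_of_ne θ 0 (by rintro rfl; simp at hθ)
  have hnot_timelike (ξ : EuclideanSpace ℝ (Fin n)) : |-(2 * π * ⟪θ, ξ⟫)| ≤ ‖(2 * π) • ξ‖ :=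
    calc |-(2 * π * ⟪θ, ξ⟫)| = 2 * π * |⟪θ, ξ⟫| := by rw [abs_neg, abs_mul, abs_of_pos two_pi_pos]
      _ ≤ 2 * π * (‖θ‖ * ‖ξ‖) := by gcongr; exact abs_real_inner_le_norm θ ξ
      _ = ‖(2 * π) • ξ‖ := by rw [hθ, one_mul, norm_smul, Real.norm_of_nonneg two_pi_pos.le]
  refine congr_fun ((continuous_lightRayTransform f θ).eq_zero_of_fourier_eq_zero_of_ne_zero
    (integrable_lightRayTransform volume f.integrable θ) fun ξ hξ => ?_) z
  rw [fourier_lightRayTransform f.integrable]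
  exact hhat _ _ (smul_ne_zero two_pi_pos.ne' hξ) (hnot_timelike ξ)

/-- If `f` is Schwartz on `ℝ^{1+n}` and its Fourier transform
`f̂(τ,ξ) = ∫ e^{-i(tτ + x·ξ)} f dt dx` vanishes at every `(τ,ξ)` with `ξ ≠ 0` and
`|τ| ≤ |ξ|` (so `f̂` is supported, away from `0`, in the open time-like cone), then the
light ray transform `Lf(z,θ) = ∫ f(s, z+sθ) ds` vanishes identically: time-like
singularities are invisible to the light ray transform. -/
theorem timelike_fourier_support_implies_light_ray_vanishes
    (n : ℕ) (hn : 2 ≤ n)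
    (f : SchwartzMap (ℝ × EuclideanSpace ℝ (Fin n)) ℂ)
    (hhat : ∀ (τ : ℝ) (ξ : EuclideanSpace ℝ (Fin n)), ξ ≠ 0 → |τ| ≤ ‖ξ‖ →
      (∫ w : ℝ × EuclideanSpace ℝ (Fin n),
          Complex.exp (-(Complex.I * ((w.1 * τ + inner ℝ w.2 ξ : ℝ) : ℂ))) * f w) = 0) :
    ∀ (z θ : EuclideanSpace ℝ (Fin n)), ‖θ‖ = 1 →
      (∫ s : ℝ, f (s, z + s • θ)) = 0 :=
  timelike_fourier_support_implies_light_ray_vanishes_general n f hhat
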